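/- arXiv:1802.01359 — 2 statements merged into one kernel-verified Lean document; each statement's English description precedes it below -/
import Mathlib

section
/- Let g ∈ L²(ℝ) and let W : ℝ → ℝ be measurable with 0 ≤ W(ξ) ≤ 1 for all ξ. For N ≥ 1 and γ ∈ (0,1) set I_{γ,N} = {ξ : W(ξ) ≤ 1 − (1−γ)^{1/N}}, and define F₁ = χ_{{W=0}}·g, F^{SC}_N = (1−W)^N·g, and F^{TH}_{N,γ} equal to g on I_{γ,N} and to (1−W)^N·g on ℝ∖I_{γ,N}. Then for every ε > 0 there exist N ∈ ℕ and γ ∈ (0,1) such that ‖F₁ − F^{TH}_{N,γ}‖_{L²} ≤ ε/2 and ‖F^{TH}_{N,γ} − F^{SC}_N‖_{L²} ≤ ε/2; in particular ‖F₁ − F^{SC}_N‖_{L²} ≤ ε. -/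
/-!
On the threshold set `(1 - W)^N ≥ 1 - γ`, so `F^TH_{N,γ}` and `F^SC_N` differ there by at most
`γ |g|`, and they agree off it; a small `γ` makes `‖F^TH - F^SC‖ ≤ γ ‖g‖ ≤ ε/2` for every `N`.
For fixed `γ < 1`, a point with `W(ξ) > 0` leaves `I_{γ,N}` once `(1 - W(ξ))^N < 1 - γ`, after
which `F₁ - F^TH = -(1 - W)^N g → 0`; where `W = 0` all three functions equal `g`. Since
`|F₁ - F^TH| ≤ |g| ∈ L²`, dominated convergence gives `‖F₁ - F^TH‖ ≤ ε/2` for large `N`, and the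
last bound is the triangle inequality.
-/

open scoped Classical ENNReal
open MeasureTheory Filter Topology

theorem MeasureTheory.tendsto_eLpNorm_zero_of_dominated {α E : Type*} [MeasurableSpace α]
    {μ : Measure α} [NormedAddCommGroup E] {p : ℝ≥0∞} (hp : p ≠ ∞) {f : ℕ → α → E} {G : α → ℝ}
    (hG : MemLp G p μ) (hf : ∀ n, AEStronglyMeasurable (f n) μ)
    (h_bound : ∀ n, ∀ᵐ x ∂μ, ‖f n x‖ ≤ G x)
    (h_lim : ∀ᵐ x ∂μ, Tendsto (fun n => f n x) atTop (𝓝 0)) :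
    Tendsto (fun n => eLpNorm (f n) p μ) atTop (𝓝 0) := by
  rcases eq_or_ne p 0 with rfl | hp0
  · simp
  have hp_pos : 0 < p.toReal := ENNReal.toReal_pos hp0 hp
  have h_lintegral : Tendsto (fun n => ∫⁻ x, ‖f n x‖ₑ ^ p.toReal ∂μ) atTop (𝓝 0) := by
    have h_fin := lintegral_rpow_enorm_lt_top_of_eLpNorm_lt_top hp0 hp hG.eLpNorm_lt_top
    refine lintegral_zero (μ := μ) ▸ tendsto_lintegral_of_dominated_convergence'
      (fun x => ‖G x‖ₑ ^ p.toReal) (fun n => (hf n).enorm.pow_const _) (fun n => ?_) h_fin.ne ?_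
    · filter_upwards [h_bound n] with x hx
      exact ENNReal.rpow_le_rpow
        (enorm_le_iff_norm_le.2 (hx.trans (Real.le_norm_self _))) hp_pos.le
    · filter_upwards [h_lim] with x hx
      simpa [ENNReal.zero_rpow_of_pos hp_pos] using hx.enorm.ennrpow_const p.toReal
  simpa [eLpNorm_eq_lintegral_rpow_enorm_toReal hp0 hp, ENNReal.zero_rpow_of_pos, hp_pos] using
    h_lintegral.ennrpow_const p.toReal⁻¹

theorem one_sub_le_one_sub_pow_of_le_one_sub_rpow {γ w : ℝ} {N : ℕ} (hγ : γ ≤ 1) (hN : N ≠ 0)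
    (hw : w ≤ 1 - (1 - γ) ^ (1 / (N : ℝ))) : 1 - γ ≤ (1 - w) ^ N := by
  have hroot : (1 - γ) ^ (N : ℝ)⁻¹ ≤ 1 - w := by rw [← one_div]; linarith
  have h_nonneg : 0 ≤ 1 - w := (Real.rpow_nonneg (by linarith) _).trans hroot
  rwa [Real.rpow_inv_le_iff_of_pos (by linarith) h_nonneg (by positivity),
    Real.rpow_natCast] at hroot

theorem ENNReal.exists_mem_Ioo_ofReal_mul_lt {C δ : ℝ≥0∞} (hC : C ≠ ∞) (hδ : 0 < δ) :
    ∃ γ ∈ Set.Ioo (0 : ℝ) 1, ENNReal.ofReal γ * C < δ := by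
  have h_tendsto : Tendsto (fun γ : ℝ => ENNReal.ofReal γ * C) (𝓝[>] 0) (𝓝 0) := by
    simpa using (ENNReal.Tendsto.mul_const (ENNReal.continuous_ofReal.tendsto 0)
      (Or.inr hC)).mono_left nhdsWithin_le_nhds
  have h_Ioo : ∀ᶠ γ in 𝓝[>] (0 : ℝ), γ ∈ Set.Ioo 0 1 := Ioo_mem_nhdsGT one_pos
  obtain ⟨γ, hγδ, hγ⟩ := ((h_tendsto.eventually_lt_const hδ).and h_Ioo).exists
  exact ⟨γ, hγ, hγδ⟩

section IterativeFiltering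

variable {α : Type*}

def thresholdSet (W : α → ℝ) (γ : ℝ) (N : ℕ) : Set α :=
  {x | W x ≤ 1 - (1 - γ) ^ (1 / (N : ℝ))}

noncomputable def stoppedIMF (W : α → ℝ) (g : α → ℂ) (N : ℕ) : α → ℂ :=
  fun x => (((1 - W x) ^ N : ℝ) : ℂ) * g x

noncomputable def thresholdedIMF (W : α → ℝ) (g : α → ℂ) (N : ℕ) (γ : ℝ) : α → ℂ :=
  (thresholdSet W γ N).piecewise g (stoppedIMF W g N)

noncomputable def limitIMF (W : α → ℝ) (g : α → ℂ) : α → ℂ :=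
  {x | W x = 0}.indicator g

variable {W : α → ℝ} {g : α → ℂ} {x : α}

theorem norm_stoppedIMF_le (hWx : W x ∈ Set.Icc 0 1) (N : ℕ) :
    ‖stoppedIMF W g N x‖ ≤ ‖g x‖ := by
  have h_nonneg : 0 ≤ 1 - W x := by linarith [hWx.2]
  rw [stoppedIMF, norm_mul, Complex.norm_real, Real.norm_of_nonneg (pow_nonneg h_nonneg _)]
  exact mul_le_of_le_one_left (norm_nonneg _) (pow_le_one₀ h_nonneg (by linarith [hWx.1]))

theorem norm_thresholdedIMF_le (hWx : W x ∈ Set.Icc 0 1) (N : ℕ) (γ : ℝ) :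
    ‖thresholdedIMF W g N γ x‖ ≤ ‖g x‖ := by
  by_cases hx : x ∈ thresholdSet W γ N
  · rw [thresholdedIMF, Set.piecewise_eq_of_mem _ _ _ hx]
  · rw [thresholdedIMF, Set.piecewise_eq_of_notMem _ _ _ hx]
    exact norm_stoppedIMF_le hWx N

theorem thresholdedIMF_of_eq_zero (hWx : W x = 0) (N : ℕ) (γ : ℝ) :
    thresholdedIMF W g N γ x = g x := by
  by_cases hx : x ∈ thresholdSet W γ N
  · rw [thresholdedIMF, Set.piecewise_eq_of_mem _ _ _ hx]
  · rw [thresholdedIMF, Set.piecewise_eq_of_notMem _ _ _ hx, stoppedIMF, hWx]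
    simp

theorem norm_limitIMF_sub_thresholdedIMF_le (hWx : W x ∈ Set.Icc 0 1) (N : ℕ) (γ : ℝ) :
    ‖(limitIMF W g - thresholdedIMF W g N γ) x‖ ≤ ‖g x‖ := by
  by_cases h0 : W x = 0
  · simp [limitIMF, h0, thresholdedIMF_of_eq_zero h0]
  · simpa [limitIMF, h0] using norm_thresholdedIMF_le hWx N γ

theorem tendsto_limitIMF_sub_thresholdedIMF (hWx : W x ∈ Set.Icc 0 1) {γ : ℝ} (hγ : γ < 1) :
    Tendsto (fun N => (limitIMF W g - thresholdedIMF W g N γ) x) atTop (𝓝 0) := by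
  rcases hWx.1.eq_or_lt with h0 | hpos
  · simp [limitIMF, ← h0, thresholdedIMF_of_eq_zero h0.symm]
  have h_pow : Tendsto (fun N : ℕ => (1 - W x) ^ N) atTop (𝓝 0) :=
    tendsto_pow_atTop_nhds_zero_of_lt_one (by linarith [hWx.2]) (by linarith)
  have h_stopped : Tendsto (fun N => stoppedIMF W g N x) atTop (𝓝 0) := by
    simpa [stoppedIMF] using ((Complex.continuous_ofReal.tendsto 0).comp h_pow).mul_const (g x)
  have h_exit : ∀ᶠ N in atTop, x ∉ thresholdSet W γ N := by
    filter_upwards [h_pow.eventually_lt_const (by linarith : (0 : ℝ) < 1 - γ),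
      eventually_ne_atTop 0] with N h_lt hN hx
    exact (one_sub_le_one_sub_pow_of_le_one_sub_rpow hγ.le hN hx).not_gt h_lt
  refine (neg_zero (G := ℂ) ▸ h_stopped.neg).congr' ?_
  filter_upwards [h_exit] with N hN
  simp [limitIMF, hpos.ne', thresholdedIMF, Set.piecewise_eq_of_notMem _ _ _ hN]

theorem norm_thresholdedIMF_sub_stoppedIMF_le (hWx : W x ∈ Set.Icc 0 1) {γ : ℝ}
    (hγ : γ ∈ Set.Icc 0 1) {N : ℕ} (hN : N ≠ 0) :
    ‖(thresholdedIMF W g N γ - stoppedIMF W g N) x‖ ≤ γ * ‖g x‖ := by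
  by_cases hx : x ∈ thresholdSet W γ N
  · have h_le := one_sub_le_one_sub_pow_of_le_one_sub_rpow hγ.2 hN hx
    have h_pow_le : (1 - W x) ^ N ≤ 1 := pow_le_one₀ (by linarith [hWx.2]) (by linarith [hWx.1])
    calc ‖(thresholdedIMF W g N γ - stoppedIMF W g N) x‖
        = ‖(((1 - (1 - W x) ^ N : ℝ)) : ℂ) * g x‖ := by
          rw [Pi.sub_apply, thresholdedIMF, Set.piecewise_eq_of_mem _ _ _ hx, stoppedIMF]
          push_cast; rw [sub_mul, one_mul]
      _ = (1 - (1 - W x) ^ N) * ‖g x‖ := by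
          rw [norm_mul, Complex.norm_real, Real.norm_of_nonneg (by linarith)]
      _ ≤ γ * ‖g x‖ := by gcongr; linarith
  · simpa [thresholdedIMF, Set.piecewise_eq_of_notMem _ _ _ hx] using
      mul_nonneg hγ.1 (norm_nonneg (g x))

variable [MeasurableSpace α] {μ : Measure α}

theorem aestronglyMeasurable_stoppedIMF (hW : Measurable W) (hg : AEStronglyMeasurable g μ)
    (N : ℕ) : AEStronglyMeasurable (stoppedIMF W g N) μ :=
  (Complex.measurable_ofReal.comp ((measurable_const.sub hW).pow_const N)).aestronglyMeasurable.mul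
    hg

theorem aestronglyMeasurable_thresholdedIMF (hW : Measurable W)
    (hg : AEStronglyMeasurable g μ) (N : ℕ) (γ : ℝ) :
    AEStronglyMeasurable (thresholdedIMF W g N γ) μ :=
  .piecewise (hW measurableSet_Iic) hg.restrict
    (aestronglyMeasurable_stoppedIMF hW hg N).restrict

theorem aestronglyMeasurable_limitIMF (hW : Measurable W) (hg : AEStronglyMeasurable g μ) :
    AEStronglyMeasurable (limitIMF W g) μ :=
  hg.indicator (hW (measurableSet_singleton 0))

theorem eLpNorm_thresholdedIMF_sub_stoppedIMF_le (hW : ∀ x, W x ∈ Set.Icc 0 1) {γ : ℝ}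
    (hγ : γ ∈ Set.Icc 0 1) {N : ℕ} (hN : N ≠ 0) (p : ℝ≥0∞) :
    eLpNorm (thresholdedIMF W g N γ - stoppedIMF W g N) p μ ≤ ENNReal.ofReal γ * eLpNorm g p μ :=
  eLpNorm_le_mul_eLpNorm_of_ae_le_mul
    (ae_of_all _ fun x => norm_thresholdedIMF_sub_stoppedIMF_le (hW x) hγ hN) p

theorem tendsto_eLpNorm_limitIMF_sub_thresholdedIMF {p : ℝ≥0∞} (hp : p ≠ ∞)
    (hWm : Measurable W) (hW : ∀ x, W x ∈ Set.Icc 0 1) (hg : MemLp g p μ) {γ : ℝ} (hγ : γ < 1) :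
    Tendsto (fun N => eLpNorm (limitIMF W g - thresholdedIMF W g N γ) p μ) atTop (𝓝 0) :=
  tendsto_eLpNorm_zero_of_dominated hp hg.norm
    (fun N => (aestronglyMeasurable_limitIMF hWm hg.1).sub
      (aestronglyMeasurable_thresholdedIMF hWm hg.1 N γ))
    (fun N => ae_of_all _ fun x => norm_limitIMF_sub_thresholdedIMF_le (hW x) N γ)
    (ae_of_all _ fun x => tendsto_limitIMF_sub_thresholdedIMF (hW x) hγ)

end IterativeFiltering

/-- Comparison of the three IMFs of the Iterative Filtering inner loop in the frequency
domain: `F₁ = χ_{{W=0}} g`, `F^SC_N = (1-W)^N g`, and the thresholded `F^TH_{N,γ}` (equal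
to `g` on `I_{γ,N} = {ξ | W ξ ≤ 1 - (1-γ)^(1/N)}` and to `(1-W)^N g` elsewhere). For every
`ε > 0` there exist `N` and `γ ∈ (0,1)` such that `‖F₁ - F^TH_{N,γ}‖_{L²} ≤ ε/2` and
`‖F^TH_{N,γ} - F^SC_N‖_{L²} ≤ ε/2`; in particular `‖F₁ - F^SC_N‖_{L²} ≤ ε`. -/
theorem stmt9 (g : ℝ → ℂ) (hg : MemLp g 2 volume) (W : ℝ → ℝ) (hWmeas : Measurable W)
    (hW : ∀ ξ : ℝ, W ξ ∈ Set.Icc (0 : ℝ) 1)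
    (F₁ : ℝ → ℂ) (hF₁ : ∀ ξ : ℝ, F₁ ξ = Set.indicator {ξ : ℝ | W ξ = 0} g ξ)
    (FSC : ℕ → ℝ → ℂ) (hFSC : ∀ (N : ℕ) (ξ : ℝ), FSC N ξ = (((1 - W ξ) ^ N : ℝ) : ℂ) * g ξ)
    (I : ℝ → ℕ → Set ℝ) (hI : ∀ (γ : ℝ) (N : ℕ), I γ N = {ξ : ℝ | W ξ ≤ 1 - (1 - γ) ^ (1 / (N : ℝ))})
    (FTH : ℕ → ℝ → ℝ → ℂ)
    (hFTH : ∀ (N : ℕ) (γ : ℝ) (ξ : ℝ),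
      FTH N γ ξ = if ξ ∈ I γ N then g ξ else (((1 - W ξ) ^ N : ℝ) : ℂ) * g ξ) :
    ∀ ε : ℝ, 0 < ε → ∃ (N : ℕ) (γ : ℝ), γ ∈ Set.Ioo (0 : ℝ) 1 ∧
      eLpNorm (F₁ - FTH N γ) 2 volume ≤ ENNReal.ofReal (ε / 2) ∧
      eLpNorm (FTH N γ - FSC N) 2 volume ≤ ENNReal.ofReal (ε / 2) ∧
      eLpNorm (F₁ - FSC N) 2 volume ≤ ENNReal.ofReal ε := by
  intro ε hε
  obtain rfl : F₁ = limitIMF W g := funext hF₁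
  obtain rfl : FSC = stoppedIMF W g := funext fun N => funext (hFSC N)
  obtain rfl : FTH = thresholdedIMF W g := by
    funext N γ ξ
    rw [hFTH, hI]
    rfl
  have hε2 : 0 < ENNReal.ofReal (ε / 2) := ENNReal.ofReal_pos.2 (half_pos hε)
  obtain ⟨γ, hγ, hγg⟩ := ENNReal.exists_mem_Ioo_ofReal_mul_lt hg.eLpNorm_ne_top hε2
  obtain ⟨N, h_limit, hN⟩ := (((tendsto_eLpNorm_limitIMF_sub_thresholdedIMF ENNReal.ofNat_ne_top
    hWmeas hW hg hγ.2).eventually_lt_const hε2).and (eventually_ne_atTop 0)).exists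
  have h_stopped : eLpNorm (thresholdedIMF W g N γ - stoppedIMF W g N) 2 volume ≤
      ENNReal.ofReal (ε / 2) :=
    (eLpNorm_thresholdedIMF_sub_stoppedIMF_le hW ⟨hγ.1.le, hγ.2.le⟩ hN 2).trans hγg.le
  refine ⟨N, γ, hγ, h_limit.le, h_stopped, ?_⟩
  have h_th := aestronglyMeasurable_thresholdedIMF hWmeas hg.1 N γ
  calc eLpNorm (limitIMF W g - stoppedIMF W g N) 2 volume
      = eLpNorm ((limitIMF W g - thresholdedIMF W g N γ) +
          (thresholdedIMF W g N γ - stoppedIMF W g N)) 2 volume := by rw [sub_add_sub_cancel]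
    _ ≤ eLpNorm (limitIMF W g - thresholdedIMF W g N γ) 2 volume +
          eLpNorm (thresholdedIMF W g N γ - stoppedIMF W g N) 2 volume :=
        eLpNorm_add_le ((aestronglyMeasurable_limitIMF hWmeas hg.1).sub h_th)
          (h_th.sub (aestronglyMeasurable_stoppedIMF hWmeas hg.1 N)) one_le_two
    _ ≤ ENNReal.ofReal (ε / 2) + ENNReal.ofReal (ε / 2) := add_le_add h_limit.le h_stopped
    _ = ENNReal.ofReal ε := by rw [← ENNReal.ofReal_add (by positivity) (by positivity), add_halves]
end

section
/- Let W be a real symmetric n×n matrix, U an orthogonal matrix and D a diagonal matrix with UᵀWU = D and all diagonal entries of D in [0,1]. Let k be the number of indices i with D_{ii} = 0 and suppose exactly one index j has D_{jj} = 1. Then for every s ∈ ℝⁿ and every N ≥ 1, ‖(I−W)^N·s − (I−W)^{N+1}·s‖₂ ≤ √(n−1−k)·(N^N/(N+1)^{N+1})·‖Uᵀs‖_∞, where ‖·‖₂ is the Euclidean norm and ‖·‖_∞ the maximum norm. -/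
open scoped Matrix

open Matrix Finset

/-! Since `U * D = W * U`, conjugation by `U` turns `(1 - W)^N - (1 - W)^(N+1) = (1 - W)^N W` into
`(1 - D)^N D`, and `U` preserves Euclidean norms. So the left side is the Euclidean norm of the
vector with entries `(1 - dᵢ)^N dᵢ s̃ᵢ`, `s̃ = Uᵀ s`. These vanish where `dᵢ = 0` or `dᵢ = 1`,
leaving `n - 1 - k` entries, each bounded by `max_{[0,1]} (1 - x)^N x · ‖s̃‖_∞`, and the maximum
`N^N / (N+1)^(N+1)` comes from the tangent-line inequality for `x ↦ x^(N+1)`. -/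

/-- Tangent-line inequality for `x ↦ x ^ (n + 1)` at `b`, a homogeneous form of Bernoulli's
inequality. -/
lemma mul_mul_pow_sub_le_pow {a b : ℝ} (ha : 0 ≤ a) (hb : 0 ≤ b) (n : ℕ) :
    (n + 1) * a * b ^ n - n * b ^ (n + 1) ≤ a ^ (n + 1) := by
  rcases hb.eq_or_lt with rfl | hb
  · rcases n with _ | n <;> simp [ha]
  have key := one_add_mul_sub_le_pow (a := a / b) (by linarith [div_nonneg ha hb.le]) (n + 1)
  have hbn : 0 < b ^ (n + 1) := by positivity
  calc (n + 1) * a * b ^ n - n * b ^ (n + 1) = (1 + (n + 1 : ℕ) * (a / b - 1)) * b ^ (n + 1) := by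
        field_simp; push_cast; ring
    _ ≤ (a / b) ^ (n + 1) * b ^ (n + 1) := by gcongr
    _ = a ^ (n + 1) := by rw [div_pow, div_mul_cancel₀ _ hbn.ne']

lemma one_sub_pow_mul_le {d : ℝ} (hd : d ≤ 1) (N : ℕ) :
    (1 - d) ^ N * d ≤ (N : ℝ) ^ N / ((N : ℝ) + 1) ^ (N + 1) := by
  rcases N.eq_zero_or_pos with rfl | hN
  · simpa using hd
  have hN : (0 : ℝ) < N := by exact_mod_cast hN
  rw [le_div_iff₀ (by positivity), ← mul_le_mul_iff_right₀ hN]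
  -- the tangent line of `x ^ (N + 1)` at `(N + 1) (1 - d)`, evaluated at `N`
  have := mul_mul_pow_sub_le_pow (b := (N + 1) * (1 - d)) hN.le
    (mul_nonneg (by positivity) (sub_nonneg.mpr hd)) N
  calc (N : ℝ) * ((1 - d) ^ N * d * ((N : ℝ) + 1) ^ (N + 1))
      = (N + 1) * N * (((N : ℝ) + 1) * (1 - d)) ^ N - N * (((N : ℝ) + 1) * (1 - d)) ^ (N + 1) := by
        simp only [mul_pow]; ring
    _ ≤ (N : ℝ) ^ (N + 1) := this
    _ = N * N ^ N := by ring

section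

variable {n R : Type*} [Fintype n] [DecidableEq n] [CommRing R]

lemma Matrix.semiconjBy_of_transpose_mul_mul_eq {U W D : Matrix n n R} (hU : Uᵀ * U = 1)
    (hUWU : Uᵀ * W * U = D) : SemiconjBy U D W := by
  rw [SemiconjBy, ← hUWU, ← Matrix.mul_assoc, ← Matrix.mul_assoc, mul_eq_one_comm.mp hU,
    Matrix.one_mul]

lemma Matrix.one_sub_pow_sub_pow_succ_eq {U W D : Matrix n n R} (hU : Uᵀ * U = 1)
    (hUWU : Uᵀ * W * U = D) (N : ℕ) :
    (1 - W) ^ N - (1 - W) ^ (N + 1) = U * ((1 - D) ^ N * D) * Uᵀ := by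
  have hDW := semiconjBy_of_transpose_mul_mul_eq hU hUWU
  have hconj : SemiconjBy U ((1 - D) ^ N * D) ((1 - W) ^ N * W) :=
    (((SemiconjBy.one_right U).sub_right hDW).pow_right N).mul_right hDW
  rw [hconj.eq, Matrix.mul_assoc, mul_eq_one_comm.mp hU, Matrix.mul_one, pow_succ, mul_sub,
    mul_one, sub_sub_cancel]

end

lemma Matrix.sum_sq_mulVec_of_transpose_mul_self {n : Type*} [Fintype n] [DecidableEq n]
    {U : Matrix n n ℝ} (hU : Uᵀ * U = 1) (v : n → ℝ) :
    ∑ i, (U *ᵥ v) i ^ 2 = ∑ i, v i ^ 2 := by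
  have : (U *ᵥ v) ⬝ᵥ (U *ᵥ v) = v ⬝ᵥ v := by
    rw [dotProduct_mulVec, ← mulVec_transpose, mulVec_mulVec, hU, one_mulVec]
  simpa [dotProduct, sq] using this

lemma sqrt_sum_sq_le_sqrt_card_mul {ι : Type*} [Fintype ι] {f : ι → ℝ} {S : Finset ι} {M : ℝ}
    (hM : 0 ≤ M) (hzero : ∀ i ∉ S, f i = 0) (hle : ∀ i ∈ S, |f i| ≤ M) :
    √(∑ i, f i ^ 2) ≤ √(#S : ℝ) * M := by
  have hsum : ∑ i, f i ^ 2 ≤ #S * M ^ 2 := by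
    rw [← sum_subset (subset_univ S) fun i _ hi ↦ by simp [hzero i hi]]
    simpa using sum_le_card_nsmul S _ _ fun i hi ↦ sq_le_sq.mpr <| (hle i hi).trans_eq
      (abs_of_nonneg hM).symm
  calc √(∑ i, f i ^ 2) ≤ √(#S * M ^ 2) := Real.sqrt_le_sqrt hsum
    _ = √(#S : ℝ) * M := by rw [Real.sqrt_mul (by positivity), Real.sqrt_sq hM]

lemma cast_card_erase_filter_ne_zero {ι : Type*} [Fintype ι] [DecidableEq ι] (d : ι → ℝ) {j : ι}
    (hj : d j ≠ 0) :
    ((#((univ.filter fun i ↦ d i ≠ 0).erase j) : ℕ) : ℝ) =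
      Fintype.card ι - 1 - #(univ.filter fun i ↦ d i = 0) := by
  have h1 := card_erase_add_one (s := univ.filter fun i ↦ d i ≠ 0) (by simpa using hj)
  have h2 := card_filter_add_card_filter_not (s := univ) (fun i ↦ d i = 0)
  simp only [card_univ] at h2
  push_cast [← h1, ← h2]
  ring

theorem stmt18_general (n : ℕ) (W U D : Matrix (Fin n) (Fin n) ℝ)
    (hU : Uᵀ * U = 1) (hD : D.IsDiag) (hUWU : Uᵀ * W * U = D)
    (hrange : ∀ i : Fin n, D i i ∈ Set.Icc (0 : ℝ) 1)
    (k : ℕ) (hk : k = (Finset.univ.filter (fun i : Fin n => D i i = 0)).card)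
    (hone : ∃! j : Fin n, D j j = 1) :
    ∀ s : Fin n → ℝ, ∀ N : ℕ, 1 ≤ N →
      Real.sqrt (∑ i : Fin n,
          (((((1 : Matrix (Fin n) (Fin n) ℝ) - W) ^ N).mulVec s -
            ((((1 : Matrix (Fin n) (Fin n) ℝ) - W) ^ (N + 1))).mulVec s) i) ^ 2) ≤
        Real.sqrt ((n : ℝ) - 1 - (k : ℝ)) * ((N : ℝ) ^ N / (N + 1 : ℝ) ^ (N + 1)) *
          ‖Uᵀ.mulVec s‖ := by
  intro s N hN
  obtain ⟨j, hj, -⟩ := hone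
  set t := Uᵀ *ᵥ s
  have hdiag : (1 - D) ^ N * D = diagonal fun i ↦ (1 - D i i) ^ N * D i i := by
    conv_lhs => rw [← hD.diagonal_diag, ← diagonal_one, diagonal_sub, diagonal_pow,
      diagonal_mul_diagonal]
    rfl
  have hcard := cast_card_erase_filter_ne_zero (fun i ↦ D i i) (j := j) (by simp [hj])
  simp only [Fintype.card_fin] at hcard
  rw [← sub_mulVec, one_sub_pow_sub_pow_succ_eq hU hUWU, ← mulVec_mulVec, ← mulVec_mulVec,
    sum_sq_mulVec_of_transpose_mul_self hU, hdiag, hk, ← hcard, mul_assoc]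
  refine sqrt_sum_sq_le_sqrt_card_mul (by positivity) (fun i hi ↦ ?_) (fun i _ ↦ ?_)
  · have hi' : i = j ∨ D i i = 0 := by
      simp only [mem_erase, mem_filter, mem_univ, true_and] at hi; tauto
    rcases hi' with rfl | hi
    · simp [mulVec_diagonal, hj, zero_pow (by omega : N ≠ 0)]
    · simp [mulVec_diagonal, hi]
  · obtain ⟨h0, h1⟩ := hrange i
    rw [mulVec_diagonal, abs_mul, abs_of_nonneg (by have := sub_nonneg.mpr h1; positivity)]
    exact mul_le_mul (one_sub_pow_mul_le h1 N) (by simpa using norm_le_pi_norm t i)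
      (abs_nonneg _) (by positivity)

/-- Let `W` be a real symmetric `n×n` matrix, `U` orthogonal and `D` diagonal with
`Uᵀ W U = D` and all diagonal entries of `D` in `[0,1]`. Let `k` be the number of indices
`i` with `D i i = 0` and suppose exactly one index has diagonal entry `1`. Then for every
`s ∈ ℝⁿ` and every `N ≥ 1`,
`‖(I-W)^N s - (I-W)^(N+1) s‖₂ ≤ √(n-1-k) · (N^N/(N+1)^(N+1)) · ‖Uᵀ s‖_∞`,
where `‖·‖₂` is the Euclidean norm and `‖·‖_∞` the maximum norm. -/
theorem stmt18 (n : ℕ) (W U D : Matrix (Fin n) (Fin n) ℝ) (hsym : W.IsSymm)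
    (hU : Uᵀ * U = 1) (hD : D.IsDiag) (hUWU : Uᵀ * W * U = D)
    (hrange : ∀ i : Fin n, D i i ∈ Set.Icc (0 : ℝ) 1)
    (k : ℕ) (hk : k = (Finset.univ.filter (fun i : Fin n => D i i = 0)).card)
    (hone : ∃! j : Fin n, D j j = 1) :
    ∀ s : Fin n → ℝ, ∀ N : ℕ, 1 ≤ N →
      Real.sqrt (∑ i : Fin n,
          (((((1 : Matrix (Fin n) (Fin n) ℝ) - W) ^ N).mulVec s -
            ((((1 : Matrix (Fin n) (Fin n) ℝ) - W) ^ (N + 1))).mulVec s) i) ^ 2) ≤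
        Real.sqrt ((n : ℝ) - 1 - (k : ℝ)) * ((N : ℝ) ^ N / (N + 1 : ℝ) ^ (N + 1)) *
          ‖Uᵀ.mulVec s‖ :=
  stmt18_general n W U D hU hD hUWU hrange k hk hone
end
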